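/- arXiv:1509.01725 — 5 statements merged into one kernel-verified Lean document; each statement's English description precedes it below -/
import Mathlib

section
/- Fix l ≥ 1 and a strictly decreasing integer tuple n ∈ ℤ^l. The family of determinants f(x,k) = f_{k,n}(x), indexed by strictly decreasing k ∈ ℤ^l, satisfies the differential equation ∂f/∂x (x,k) = ∑_{s=1}^l [f(x, k - e_s) + f(x, k + e_s)]/2, where e_s is the s-th standard basis vector and f(x,·) is extended to all of ℤ^l as the determinant (which is antisymmetric and vanishes on tuples with repeated entries). -/
/-- The modified Bessel function of the first kind `I_j(x)`, `j ∈ ℤ`,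
defined by its power series (extended to negative indices by `I_{-j} = I_j`). -/
noncomputable def besselI (j : ℤ) (x : ℝ) : ℝ :=
  ∑' s : ℕ, (x / 2) ^ (j.natAbs + 2 * s) /
    ((Nat.factorial s : ℝ) * (Nat.factorial (j.natAbs + s) : ℝ))

/-- The determinant `f_{k,n}(x) = det (I_{k_j - n_i}(x))_{i,j}`. -/
noncomputable def fdet (l : ℕ) (k n : Fin l → ℤ) (x : ℝ) : ℝ :=
  Matrix.det (fun i j : Fin l => besselI (k j - n i) x)

/-!
Differentiating the power series termwise gives `I_j' = (I_{j-1} + I_{j+1}) / 2`: splitting the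
factor `j + 2s` of the `s`-th term as `(j + s) + s` produces the `s`-th term of `I_{j-1}` and the
`(s-1)`-st term of `I_{j+1}`. The determinant is multilinear in the columns, so its derivative is
the sum over `s` of the determinants with column `s` differentiated; by the recurrence and
linearity in that column, each of them is the average of the determinants with `k_s` replaced by
`k_s - 1` and by `k_s + 1`.
-/

open Nat Matrix

theorem hasDerivAt_tsum_of_abs_le {F F' : ℕ → ℝ → ℝ}
    (hF : ∀ s y, HasDerivAt (F s) (F' s y) y) {x : ℝ} (hFx : Summable (F · x))
    (hF' : ∀ y, Summable (F' · y)) (hdom : ∀ s {y R}, |y| ≤ R → |F' s y| ≤ F' s R) :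
    HasDerivAt (fun y => ∑' s, F s y) (∑' s, F' s x) x := by
  have hx : x ∈ Set.Ioo (-(|x| + 1)) (|x| + 1) := abs_lt.1 (lt_add_one _)
  exact hasDerivAt_tsum_of_isPreconnected (hF' (|x| + 1)) isOpen_Ioo
    (convex_Ioo _ _).isPreconnected (fun s y _ => hF s y)
    (fun s y hy => hdom s (abs_lt.2 hy).le) hx hFx hx

theorem hasDerivAt_det {𝕜 ι : Type*} [NontriviallyNormedField 𝕜] [Fintype ι] [DecidableEq ι]
    {M : 𝕜 → Matrix ι ι 𝕜} {M' : Matrix ι ι 𝕜} {x : 𝕜}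
    (h : ∀ i j, HasDerivAt (fun y => M y i j) (M' i j) x) :
    HasDerivAt (fun y => (M y).det) (∑ j, ((M x).updateCol j fun i => M' i j).det) x := by
  let D : ContinuousMultilinearMap 𝕜 (fun _ : ι => ι → 𝕜) 𝕜 :=
    { Matrix.detRowAlternating.toMultilinearMap with cont := continuous_id.matrix_det }
  have hMt : HasDerivAt (fun y (j i : ι) => M y i j) (fun j i => M' i j) x :=
    hasDerivAt_pi.2 fun j => hasDerivAt_pi.2 fun i => h i j
  have hD := (D.hasFDerivAt _).comp_hasDerivAt x hMt
  -- `erw`: the module structure on the codomain of `D` matches the normed one only up to unfolding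
  erw [ContinuousMultilinearMap.linearDeriv_apply] at hD
  rw [show (fun y => (M y).det) = D ∘ fun y j i => M y i j from
    funext fun y => (det_transpose _).symm]
  refine hD.congr_deriv (Finset.sum_congr rfl fun j _ => ?_)
  rw [← det_transpose, ← updateRow_transpose]
  rfl

lemma of_apply_update_eq_updateCol {α β γ R : Type*} [DecidableEq β] (A : α → γ → R)
    (k : β → γ) (s : β) (c : γ) :
    (of fun i j => A i (Function.update k s c j)) = (of fun i j => A i (k j)).updateCol s
      fun i => A i c := by
  ext i j
  rcases eq_or_ne j s with rfl | hj <;> simp [*]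

theorem hasDerivAt_det_apply_sub_of_recurrence {𝕜 ι : Type*} [NontriviallyNormedField 𝕜]
    [Fintype ι] [DecidableEq ι] {g : ℤ → 𝕜 → 𝕜}
    (hg : ∀ j y, HasDerivAt (g j) ((g (j - 1) y + g (j + 1) y) / 2) y) (k n : ι → ℤ) (x : 𝕜) :
    HasDerivAt (fun y => (of fun i j => g (k j - n i) y).det)
      ((∑ s, ((of fun i j => g (Function.update k s (k s - 1) j - n i) x).det +
        (of fun i j => g (Function.update k s (k s + 1) j - n i) x).det)) / 2) x := by
  refine (hasDerivAt_det (M := fun y => of fun i j => g (k j - n i) y)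
    fun i j => hg (k j - n i) x).congr_deriv ?_
  rw [Finset.sum_div]
  refine Finset.sum_congr rfl fun s _ => ?_
  have hcol : (fun i => (g (k s - n i - 1) x + g (k s - n i + 1) x) / 2) =
      (2⁻¹ : 𝕜) • ((fun i => g (k s - 1 - n i) x) + fun i => g (k s + 1 - n i) x) := by
    funext i
    simp only [Pi.smul_apply, Pi.add_apply, smul_eq_mul, sub_right_comm, add_sub_right_comm]
    ring
  rw [hcol, det_updateCol_smul, det_updateCol_add,
    of_apply_update_eq_updateCol (fun i t => g (t - n i) x),
    of_apply_update_eq_updateCol (fun i t => g (t - n i) x)]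
  ring

noncomputable def besselTerm (m : ℕ) (y : ℝ) (s : ℕ) : ℝ :=
  (y / 2) ^ (m + 2 * s) / ((s ! : ℝ) * ((m + s)! : ℝ))

lemma besselI_natCast (m : ℕ) (y : ℝ) : besselI m y = ∑' s, besselTerm m y s := rfl

lemma besselI_neg (j : ℤ) : besselI (-j) = besselI j := by
  unfold besselI; rw [Int.natAbs_neg]

lemma abs_besselTerm_le {m : ℕ} {y R : ℝ} (h : |y| ≤ R) (s : ℕ) :
    |besselTerm m y s| ≤ besselTerm m R s := by
  rw [besselTerm, besselTerm, abs_div, abs_pow, abs_div, abs_two,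
    abs_of_pos (by positivity : (0 : ℝ) < s ! * (m + s)!)]
  gcongr

lemma summable_besselTerm (m : ℕ) (y : ℝ) : Summable (besselTerm m y) := by
  refine .of_norm_bounded ((Real.summable_pow_div_factorial ((|y| / 2) ^ 2)).mul_left
    ((|y| / 2) ^ m)) fun s => ?_
  rw [Real.norm_eq_abs, mul_div_assoc', ← pow_mul, ← pow_add]
  calc |besselTerm m y s| ≤ besselTerm m |y| s := abs_besselTerm_le le_rfl s
    _ ≤ _ := by
      rw [besselTerm]
      gcongr
      exact le_mul_of_one_le_right (by positivity) (by exact_mod_cast (m + s).factorial_pos)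

lemma besselI_natCast_eq_add_tsum (m : ℕ) :
    besselI m = fun y => besselTerm m y 0 + ∑' s, besselTerm m y (s + 1) :=
  funext fun y => (summable_besselTerm m y).tsum_eq_zero_add

lemma hasDerivAt_besselTerm (m s : ℕ) (y : ℝ) :
    HasDerivAt (besselTerm m · s)
      ((m + 2 * s : ℕ) * (y / 2) ^ (m + 2 * s - 1) / (2 * (s ! * (m + s)! : ℝ))) y := by
  refine ((((hasDerivAt_id' y).div_const 2).fun_pow (m + 2 * s)).div_const
    ((s ! : ℝ) * ((m + s)! : ℝ))).congr_deriv ?_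
  field_simp

lemma hasDerivAt_besselTerm_zero_succ (s : ℕ) (y : ℝ) :
    HasDerivAt (besselTerm 0 · (s + 1)) (besselTerm 1 y s) y := by
  convert hasDerivAt_besselTerm 0 (s + 1) y using 1
  rw [besselTerm, show 0 + 2 * (s + 1) - 1 = 1 + 2 * s by omega, zero_add, zero_add,
    show 1 + s = s + 1 from add_comm 1 s, factorial_succ]
  push_cast
  field_simp

lemma hasDerivAt_besselTerm_succ_succ (m s : ℕ) (y : ℝ) :
    HasDerivAt (besselTerm (m + 1) · (s + 1))
      ((besselTerm m y (s + 1) + besselTerm (m + 2) y s) / 2) y := by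
  convert hasDerivAt_besselTerm (m + 1) (s + 1) y using 1
  rw [besselTerm, besselTerm, show m + 1 + 2 * (s + 1) - 1 = m + 2 * (s + 1) by omega,
    show m + 2 + 2 * s = m + 2 * (s + 1) by omega, show m + 2 + s = m + s + 1 + 1 by omega,
    show m + 1 + (s + 1) = m + s + 1 + 1 by omega, show m + (s + 1) = m + s + 1 by omega]
  simp only [factorial_succ]
  push_cast
  field_simp
  ring

lemma hasDerivAt_besselTerm_succ_zero (m : ℕ) (y : ℝ) :
    HasDerivAt (besselTerm (m + 1) · 0) (besselTerm m y 0 / 2) y := by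
  convert hasDerivAt_besselTerm (m + 1) 0 y using 1
  simp only [besselTerm, mul_zero, add_zero, add_tsub_cancel_right, factorial_succ]
  push_cast
  field_simp

lemma hasDerivAt_besselI_zero (x : ℝ) : HasDerivAt (besselI 0) (besselI 1 x) x := by
  have hhead : HasDerivAt (besselTerm 0 · 0) 0 x := by
    simpa using hasDerivAt_besselTerm 0 0 x
  have htail : HasDerivAt (fun y => ∑' s, besselTerm 0 y (s + 1)) (∑' s, besselTerm 1 x s) x :=
    hasDerivAt_tsum_of_abs_le hasDerivAt_besselTerm_zero_succ
      ((summable_nat_add_iff 1).2 (summable_besselTerm 0 x)) (summable_besselTerm 1)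
      fun s _ _ h => abs_besselTerm_le h s
  rw [show (0 : ℤ) = (0 : ℕ) from rfl, besselI_natCast_eq_add_tsum]
  exact (hhead.fun_add htail).congr_deriv (zero_add _)

lemma hasDerivAt_besselI_succ (m : ℕ) (x : ℝ) :
    HasDerivAt (besselI (m + 1)) ((besselI m x + besselI (m + 2) x) / 2) x := by
  have htail : HasDerivAt (fun y => ∑' s, besselTerm (m + 1) y (s + 1))
      (∑' s, (besselTerm m x (s + 1) + besselTerm (m + 2) x s) / 2) x :=
    hasDerivAt_tsum_of_abs_le (hasDerivAt_besselTerm_succ_succ m)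
      ((summable_nat_add_iff 1).2 (summable_besselTerm (m + 1) x))
      (fun y => (((summable_nat_add_iff 1).2 (summable_besselTerm m y)).add
        (summable_besselTerm (m + 2) y)).div_const 2)
      fun s _ _ h => by
        rw [abs_div, abs_two]
        gcongr
        exact (abs_add_le _ _).trans (add_le_add (abs_besselTerm_le h _) (abs_besselTerm_le h _))
  have hsum := (hasDerivAt_besselTerm_succ_zero m x).fun_add htail
  rw [show (m + 1 : ℤ) = (m + 1 : ℕ) by push_cast; rfl, besselI_natCast_eq_add_tsum]
  refine hsum.congr_deriv ?_
  have hI2 := besselI_natCast (m + 2) x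
  push_cast at hI2
  rw [hI2, besselI_natCast_eq_add_tsum, tsum_div_const,
    ((summable_nat_add_iff 1).2 (summable_besselTerm m x)).tsum_add (summable_besselTerm _ x)]
  ring

lemma hasDerivAt_besselI_natCast (n : ℕ) (x : ℝ) :
    HasDerivAt (besselI n) ((besselI (n - 1) x + besselI (n + 1) x) / 2) x := by
  cases n with
  | zero =>
    rw [Nat.cast_zero, zero_sub, zero_add, besselI_neg, add_self_div_two]
    exact hasDerivAt_besselI_zero x
  | succ m =>
    push_cast
    rw [add_sub_cancel_right, add_assoc, one_add_one_eq_two]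
    exact hasDerivAt_besselI_succ m x

theorem hasDerivAt_besselI (j : ℤ) (x : ℝ) :
    HasDerivAt (besselI j) ((besselI (j - 1) x + besselI (j + 1) x) / 2) x := by
  obtain ⟨n, rfl | rfl⟩ := Int.eq_nat_or_neg j
  · exact hasDerivAt_besselI_natCast n x
  · rw [besselI_neg, show -(n : ℤ) - 1 = -(n + 1) by ring, show -(n : ℤ) + 1 = -(n - 1) by ring,
      besselI_neg, besselI_neg, add_comm]
    exact hasDerivAt_besselI_natCast n x

theorem fdet_ode_general (l : ℕ) (n : Fin l → ℤ)
    (k : Fin l → ℤ) (x : ℝ) :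
    HasDerivAt (fun y => fdet l k n y)
      ((∑ s : Fin l, (fdet l (Function.update k s (k s - 1)) n x +
        fdet l (Function.update k s (k s + 1)) n x)) / 2) x :=
  hasDerivAt_det_apply_sub_of_recurrence hasDerivAt_besselI k n x

/-- The family `f(x,k) = f_{k,n}(x)` satisfies
`∂f/∂x (x,k) = (1/2) ∑_{s} [f(x, k - e_s) + f(x, k + e_s)]`. -/
theorem fdet_ode (l : ℕ) (hl : 1 ≤ l) (n : Fin l → ℤ) (hn : StrictAnti n)
    (k : Fin l → ℤ) (hk : StrictAnti k) (x : ℝ) :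
    HasDerivAt (fun y => fdet l k n y)
      ((∑ s : Fin l, (fdet l (Function.update k s (k s - 1)) n x +
        fdet l (Function.update k s (k s + 1)) n x)) / 2) x :=
  fdet_ode_general l n k x
end

section
/- Fix l ≥ 1 and a strictly decreasing integer tuple n ∈ ℤ^l. For every R > 1 there exists a constant C(R) > 0 such that ∑_{k} |f_{k,n}(x)|² < C(R) for every x ∈ [0, R], where the sum ranges over all strictly decreasing tuples k ∈ ℤ^l. In particular, for each fixed x ≥ 0 the family (f_{k,n}(x))_k is square-summable. -/
/-!
Each entry `I_{k_j - n_i}(x)` with `0 ≤ x ≤ R` is at most `e^{R²/4} (R/2)^a / a!` with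
`a = |k_j - n_i|`, so column `j` of the matrix is bounded by a function `h (k_j)` that is
summable over `ℤ`. Expanding the determinant gives `|f_{k,n}(x)| ≤ l! ∏_j h (k_j)`, and the
square of the right-hand side is summable over all of `ℤ^l`, uniformly in `x ∈ [0, R]`.
-/

open scoped Nat
open Finset

namespace Matrix

variable {R S : Type*} [CommRing R] [Nontrivial R] [CommRing S] [LinearOrder S]
  [IsStrictOrderedRing S] {n : Type*} [Fintype n] [DecidableEq n]

theorem det_le_prod {A : Matrix n n R} {abv : AbsoluteValue R S} {x : n → S}
    (hx : ∀ i j, abv (A i j) ≤ x j) :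
    abv A.det ≤ (Fintype.card n)! • ∏ j, x j :=
  calc
    abv A.det = abv (∑ σ : Equiv.Perm n, Equiv.Perm.sign σ • ∏ i, A (σ i) i) :=
      congr_arg abv (det_apply _)
    _ ≤ ∑ σ : Equiv.Perm n, abv (Equiv.Perm.sign σ • ∏ i, A (σ i) i) := abv.sum_le _ _
    _ = ∑ σ : Equiv.Perm n, ∏ i, abv (A (σ i) i) :=
      sum_congr rfl fun σ _ => by rw [abv.map_units_int_smul, abv.map_prod]
    _ ≤ ∑ _σ : Equiv.Perm n, ∏ j, x j := by gcongr; apply hx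
    _ = (Fintype.card n)! • ∏ j, x j := by simp [Fintype.card_perm]

end Matrix

theorem summable_pi_prod_of_nonneg {β : Type*} {f : β → ℝ} (hf0 : 0 ≤ f) (hf : Summable f) :
    ∀ l : ℕ, Summable (fun k : Fin l → β => ∏ j, f (k j))
  | 0 => (hasSum_fintype _).summable
  | l + 1 => by
    rw [← (Fin.consEquiv fun _ : Fin (l + 1) => β).summable_iff]
    have hprod : ∀ k : Fin l → β, 0 ≤ ∏ j, f (k j) := fun k => prod_nonneg fun j _ => hf0 _
    simpa [Function.comp_def, Fin.consEquiv, Fin.prod_univ_succ] using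
      hf.mul_of_nonneg (summable_pi_prod_of_nonneg hf0 hf l) hf0 hprod

theorem Summable.sq {α : Type*} {f : α → ℝ} (hf : Summable f) : Summable (fun a => f a ^ 2) := by
  have habs := hf.abs
  refine habs.mul_left (∑' a, |f a|) |>.of_nonneg_of_le (fun a => sq_nonneg _) fun a => ?_
  rw [← sq_abs, pow_two]
  exact mul_le_mul_of_nonneg_right (habs.le_tsum a fun b _ => abs_nonneg _) (abs_nonneg _)

theorem summable_pow_natAbs_sub_div_factorial (r : ℝ) (t : ℤ) :
    Summable (fun m : ℤ => r ^ (m - t).natAbs / ((m - t).natAbs ! : ℝ)) := by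
  have h : Summable (fun m : ℤ => r ^ m.natAbs / (m.natAbs ! : ℝ)) :=
    .of_nat_of_neg (by simpa using Real.summable_pow_div_factorial r)
      (by simpa using Real.summable_pow_div_factorial r)
  simpa [Function.comp_def] using (Equiv.subRight t).summable_iff.mpr h

section besselI

variable {x R : ℝ}

theorem besselI_term_le (hx : 0 ≤ x) (hxR : x ≤ R) (a s : ℕ) :
    (x / 2) ^ (a + 2 * s) / ((s ! : ℝ) * ((a + s)! : ℝ)) ≤
      (R / 2) ^ a / (a ! : ℝ) * ((R ^ 2 / 4) ^ s / (s ! : ℝ)) := by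
  have hfact : (a ! : ℝ) * (s ! : ℝ) ≤ (s ! : ℝ) * ((a + s)! : ℝ) := by
    rw [mul_comm]
    gcongr
    omega
  have hR : 0 ≤ R := hx.trans hxR
  calc (x / 2) ^ (a + 2 * s) / ((s ! : ℝ) * ((a + s)! : ℝ))
      ≤ (R / 2) ^ (a + 2 * s) / ((a ! : ℝ) * (s ! : ℝ)) := by
        gcongr
    _ = (R / 2) ^ a / (a ! : ℝ) * ((R ^ 2 / 4) ^ s / (s ! : ℝ)) := by
        rw [div_mul_div_comm, pow_add, pow_mul]
        ring

theorem besselI_nonneg (j : ℤ) (hx : 0 ≤ x) : 0 ≤ besselI j x :=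
  tsum_nonneg fun s => by positivity

theorem abs_besselI_le (j : ℤ) (hx : 0 ≤ x) (hxR : x ≤ R) :
    |besselI j x| ≤ Real.exp (R ^ 2 / 4) * ((R / 2) ^ j.natAbs / (j.natAbs ! : ℝ)) := by
  have hexp := Real.summable_pow_div_factorial (R ^ 2 / 4)
  have hterm : Summable fun s : ℕ =>
      (x / 2) ^ (j.natAbs + 2 * s) / ((s ! : ℝ) * ((j.natAbs + s)! : ℝ)) :=
    ((Real.summable_pow_div_factorial (x ^ 2 / 4)).mul_left _).of_nonneg_of_le
      (fun s => by positivity)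
      (besselI_term_le hx (le_refl x) _)
  have hexp_eq : Real.exp (R ^ 2 / 4) = ∑' s : ℕ, (R ^ 2 / 4) ^ s / (s ! : ℝ) := by
    rw [Real.exp_eq_exp_ℝ, NormedSpace.exp_eq_tsum_div]
  rw [abs_of_nonneg (besselI_nonneg j hx), mul_comm, hexp_eq, ← tsum_mul_left]
  exact hterm.tsum_le_tsum (besselI_term_le hx hxR _) (hexp.mul_left _)

end besselI

noncomputable def besselColumnBound {l : ℕ} (n : Fin l → ℤ) (R : ℝ) (m : ℤ) : ℝ :=
  ∑ i, Real.exp (R ^ 2 / 4) * ((R / 2) ^ (m - n i).natAbs / ((m - n i).natAbs ! : ℝ))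

theorem summable_besselColumnBound {l : ℕ} (n : Fin l → ℤ) (R : ℝ) :
    Summable (besselColumnBound n R) :=
  summable_sum fun i _ => (summable_pow_natAbs_sub_div_factorial (R / 2) (n i)).mul_left _

theorem sq_fdet_le {l : ℕ} (k n : Fin l → ℤ) {x R : ℝ} (hx : 0 ≤ x) (hxR : x ≤ R) :
    fdet l k n x ^ 2 ≤ (l ! : ℝ) ^ 2 * ∏ j, besselColumnBound n R (k j) ^ 2 := by
  have hentry : ∀ i j, |besselI (k j - n i) x| ≤ besselColumnBound n R (k j) := fun i j =>
    (abs_besselI_le _ hx hxR).trans <| single_le_sum (f := fun i' =>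
      Real.exp (R ^ 2 / 4) * ((R / 2) ^ (k j - n i').natAbs / ((k j - n i').natAbs ! : ℝ)))
      (fun _ _ => by have := hx.trans hxR; positivity) (mem_univ i)
  have hdet := Matrix.det_le_prod (abv := AbsoluteValue.abs) hentry
  simp only [AbsoluteValue.abs_apply, Fintype.card_fin, nsmul_eq_mul] at hdet
  rw [← sq_abs, prod_pow, ← mul_pow]
  exact pow_le_pow_left₀ (abs_nonneg _) hdet 2

theorem fdet_sq_summable_general (l : ℕ) (n : Fin l → ℤ) (R : ℝ) :
    ∃ C : ℝ, 0 < C ∧ ∀ x : ℝ, 0 ≤ x → x ≤ R →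
      Summable (fun k : {k : Fin l → ℤ // StrictAnti k} => (fdet l k.1 n x) ^ 2) ∧
      ∑' k : {k : Fin l → ℤ // StrictAnti k}, (fdet l k.1 n x) ^ 2 < C := by
  set g : (Fin l → ℤ) → ℝ := fun k => (l ! : ℝ) ^ 2 * ∏ j, besselColumnBound n R (k j) ^ 2
  have hg0 : 0 ≤ g := fun k => by positivity
  have hg : Summable g := ((summable_pi_prod_of_nonneg (fun m => sq_nonneg _)
    (summable_besselColumnBound n R).sq l).mul_left _)
  refine ⟨∑' k, g k + 1, by linarith [tsum_nonneg (L := .unconditional _) hg0], fun x hx hxR => ?_⟩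
  have hle : ∀ k : {k : Fin l → ℤ // StrictAnti k}, fdet l k.1 n x ^ 2 ≤ g k :=
    fun k => sq_fdet_le k.1 n hx hxR
  have hgsub : Summable fun k : {k : Fin l → ℤ // StrictAnti k} => g k :=
    hg.comp_injective Subtype.val_injective
  have hsum := hgsub.of_nonneg_of_le (fun _ => sq_nonneg _) hle
  refine ⟨hsum, ?_⟩
  calc ∑' k : {k : Fin l → ℤ // StrictAnti k}, fdet l k.1 n x ^ 2
      ≤ ∑' k : {k : Fin l → ℤ // StrictAnti k}, g k := hsum.tsum_le_tsum hle hgsub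
    _ ≤ ∑' k, g k := hg.tsum_subtype_le g _ hg0
    _ < ∑' k, g k + 1 := lt_add_one _

/-- For every `R > 1` there is `C(R) > 0` with `∑_k |f_{k,n}(x)|² < C(R)` for all
`x ∈ [0,R]`, the sum ranging over strictly decreasing `k ∈ ℤ^l`; in particular, for
each `x ≥ 0` the family `(f_{k,n}(x))_k` is square-summable. -/
theorem fdet_sq_summable (l : ℕ) (hl : 1 ≤ l) (n : Fin l → ℤ) (hn : StrictAnti n)
    (R : ℝ) (hR : 1 < R) :
    ∃ C : ℝ, 0 < C ∧ ∀ x : ℝ, 0 ≤ x → x ≤ R →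
      Summable (fun k : {k : Fin l → ℤ // StrictAnti k} => (fdet l k.1 n x) ^ 2) ∧
      ∑' k : {k : Fin l → ℤ // StrictAnti k}, (fdet l k.1 n x) ^ 2 < C :=
  fdet_sq_summable_general l n R
end

section
/- For l = 2: for all integers k_1 > k_2, n_1 > n_2 and all x > 0, one has I_{k_1-n_1}(x) I_{k_2-n_2}(x) − I_{k_2-n_1}(x) I_{k_1-n_2}(x) > 0. -/
namespace FdetAux

open Finset

/-- Series term of `besselI` with index `p = j.natAbs`. -/
noncomputable def term (x : ℝ) (p s : ℕ) : ℝ :=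
  (x / 2) ^ (p + 2 * s) / ((Nat.factorial s : ℝ) * (Nat.factorial (p + s) : ℝ))

lemma besselI_eq (j : ℤ) (x : ℝ) : besselI j x = ∑' s, term x j.natAbs s := rfl

lemma norm_term_eq (x : ℝ) (p s : ℕ) : ‖term x p s‖
    = (|x| / 2) ^ (p + 2 * s) / ((Nat.factorial s : ℝ) * (Nat.factorial (p + s) : ℝ)) := by
  rw [term, norm_div, norm_pow]
  congr 2
  · rw [Real.norm_eq_abs, abs_div]; norm_num
  · rw [Real.norm_eq_abs, abs_of_nonneg]; positivity

lemma summable_norm_term (x : ℝ) (p : ℕ) : Summable fun s => ‖term x p s‖ := by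
  have h := (Real.summable_pow_div_factorial ((|x| / 2) ^ 2)).mul_left ((|x| / 2) ^ p)
  refine h.of_nonneg_of_le (fun s => norm_nonneg _) (fun s => ?_)
  rw [norm_term_eq]
  calc (|x| / 2) ^ (p + 2 * s) / ((Nat.factorial s : ℝ) * (Nat.factorial (p + s) : ℝ))
      ≤ (|x| / 2) ^ (p + 2 * s) / ((Nat.factorial s : ℝ) * 1) := by
        refine div_le_div_of_nonneg_left (by positivity) (by positivity) ?_
        exact mul_le_mul_of_nonneg_left (by exact_mod_cast (p + s).factorial_pos)
          (by positivity)
    _ = (|x| / 2) ^ p * (((|x| / 2) ^ 2) ^ s / (Nat.factorial s : ℝ)) := by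
        rw [mul_one, pow_add, pow_mul, mul_div_assoc]

/-- Vandermonde-type identity in ℕ. -/
lemma natid (p q m : ℕ) :
    ∑ ij ∈ antidiagonal m, m.choose ij.1 * (p + q + m).choose (p + ij.1)
      = (p + q + 2 * m).choose (p + m) := by
  have v := Nat.add_choose_eq m (p + q + m) (p + m)
  rw [Finset.Nat.sum_antidiagonal_eq_sum_range_succ_mk] at v
  rw [Finset.Nat.sum_antidiagonal_eq_sum_range_succ_mk]
  have e : (p + q + 2 * m) = m + (p + q + m) := by ring
  rw [e, v]
  rw [← Finset.sum_subset (Finset.range_subset_range.mpr (by omega : m + 1 ≤ p + m + 1))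
    (fun k _ hk => by
      rw [Nat.choose_eq_zero_of_lt (by simpa using hk), zero_mul])]
  rw [← Finset.sum_range_reflect]
  refine Finset.sum_congr rfl fun s hs => ?_
  have hsm : s ≤ m := by simpa using Nat.lt_succ_iff.mp (Finset.mem_range.mp hs)
  have h1 : m + 1 - 1 - s = m - s := by omega
  have h2 : p + (m - s) = p + m - s := by omega
  simp only [h1, h2, Nat.choose_symm hsm]

/-- The coefficient-level term of the product series. -/
noncomputable def cterm (x : ℝ) (p q m : ℕ) : ℝ :=
  (x / 2) ^ (p + q + 2 * m) *
    (((p + q + 2 * m).choose (p + m) : ℝ) /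
      ((Nat.factorial m : ℝ) * (Nat.factorial (p + q + m) : ℝ)))

lemma term_mul_term (x : ℝ) (p q s t : ℕ) :
    term x p s * term x q t
      = (x / 2) ^ (p + q + 2 * (s + t)) *
        ((((s + t).choose s * (p + q + (s + t)).choose (p + s) : ℕ) : ℝ) /
          ((Nat.factorial (s + t) : ℝ) * (Nat.factorial (p + q + (s + t)) : ℝ))) := by
  have hf1 := Nat.choose_mul_factorial_mul_factorial (Nat.le_add_right s t)
  have e1 : s + t - s = t := by omega
  rw [e1] at hf1
  have hf2 := Nat.choose_mul_factorial_mul_factorial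
    (show p + s ≤ p + q + (s + t) by omega)
  have e2 : p + q + (s + t) - (p + s) = q + t := by omega
  rw [e2] at hf2
  have F1 : (((s + t).choose s : ℝ)) * ((s.factorial : ℝ) * (t.factorial : ℝ))
      = ((s + t).factorial : ℝ) := by
    have N1 : (s + t).choose s * (s.factorial * t.factorial) = (s + t).factorial := by
      rw [← hf1]; ring
    exact_mod_cast N1
  have F2 : (((p + q + (s + t)).choose (p + s) : ℝ)) *
      (((p + s).factorial : ℝ) * ((q + t).factorial : ℝ))
      = ((p + q + (s + t)).factorial : ℝ) := by
    have N2 : (p + q + (s + t)).choose (p + s) * ((p + s).factorial * (q + t).factorial)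
        = (p + q + (s + t)).factorial := by rw [← hf2]; ring
    exact_mod_cast N2
  rw [term, term, div_mul_div_comm, ← pow_add]
  have he : (p + 2 * s) + (q + 2 * t) = p + q + 2 * (s + t) := by omega
  rw [he, div_eq_mul_one_div]
  congr 1
  rw [div_eq_div_iff (by positivity) (by positivity)]
  push_cast
  rw [one_mul, ← F1, ← F2]
  ring

lemma antidiagonal_sum_eq (x : ℝ) (p q m : ℕ) :
    ∑ kl ∈ antidiagonal m, term x p kl.1 * term x q kl.2 = cterm x p q m := by
  rw [Finset.sum_congr rfl (fun kl hkl => by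
    have hm : kl.1 + kl.2 = m := Finset.HasAntidiagonal.mem_antidiagonal.mp hkl
    rw [term_mul_term, hm])]
  rw [cterm, ← Finset.mul_sum, ← Finset.sum_div, ← Nat.cast_sum, natid]

lemma besselI_mul (a b : ℤ) (x : ℝ) :
    besselI a x * besselI b x = ∑' m, cterm x a.natAbs b.natAbs m := by
  rw [besselI_eq, besselI_eq,
    tsum_mul_tsum_eq_tsum_sum_antidiagonal_of_summable_norm
      (summable_norm_term x _) (summable_norm_term x _)]
  exact tsum_congr fun m => antidiagonal_sum_eq x _ _ m

lemma summable_cterm (x : ℝ) (p q : ℕ) : Summable (cterm x p q) := by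
  have h := (summable_norm_sum_mul_antidiagonal_of_summable_norm
    (summable_norm_term x p) (summable_norm_term x q)).of_norm
  exact (summable_congr (fun m => (antidiagonal_sum_eq x p q m))).mp h

lemma choose_step_le {n j : ℕ} (h : 2 * (j + 1) ≤ n) : n.choose j ≤ n.choose (j + 1) := by
  have he := Nat.choose_succ_right_eq n j
  have h1 : n.choose j * (j + 1) ≤ n.choose (j + 1) * (j + 1) := by
    rw [he]
    exact Nat.mul_le_mul_left _ (by omega)
  exact Nat.le_of_mul_le_mul_right h1 (by omega)

lemma choose_step_lt {n j : ℕ} (h : 2 * (j + 1) ≤ n) : n.choose j < n.choose (j + 1) := by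
  have he := Nat.choose_succ_right_eq n j
  have hpos : 0 < n.choose j := Nat.choose_pos (by omega)
  have h1 : n.choose j * (j + 1) < n.choose (j + 1) * (j + 1) := by
    rw [he]
    exact Nat.mul_lt_mul_of_le_of_lt (le_refl _) (by omega) hpos
  exact Nat.lt_of_mul_lt_mul_right h1

lemma choose_mono_half {n : ℕ} : ∀ {j j' : ℕ}, j ≤ j' → 2 * j' ≤ n → n.choose j ≤ n.choose j' := by
  intro j j' h h2
  induction j' with
  | zero => have : j = 0 := by omega
            simp [this]
  | succ k ih =>
    rcases Nat.lt_or_ge j (k + 1) with hlt | hge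
    · exact le_trans (ih (by omega) (by omega)) (choose_step_le h2)
    · have : j = k + 1 := by omega
      simp [this]

lemma choose_lt_half {n : ℕ} {j j' : ℕ} (h : j < j') (h2 : 2 * j' ≤ n) :
    n.choose j < n.choose j' :=
  lt_of_lt_of_le (choose_step_lt (by omega)) (choose_mono_half (by omega) h2)

lemma choose_le_dist {n k k' : ℕ} (hk : k ≤ n)
    (h : (2 * (k : ℤ) - n).natAbs ≤ (2 * (k' : ℤ) - n).natAbs) :
    n.choose k' ≤ n.choose k := by
  by_cases hk' : k' ≤ n
  · have e1 : n.choose k = n.choose (min k (n - k)) := by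
      rcases le_or_gt (2 * k) n with h2 | h2
      · rw [min_eq_left (by omega)]
      · rw [min_eq_right (by omega), Nat.choose_symm hk]
    have e2 : n.choose k' = n.choose (min k' (n - k')) := by
      rcases le_or_gt (2 * k') n with h2 | h2
      · rw [min_eq_left (by omega)]
      · rw [min_eq_right (by omega), Nat.choose_symm hk']
    rw [e1, e2]
    exact choose_mono_half (by omega) (by omega)
  · rw [Nat.choose_eq_zero_of_lt (by omega)]
    exact Nat.zero_le _

lemma choose_lt_dist {n k k' : ℕ} (hk : k ≤ n) (hk' : k' ≤ n)
    (h : (2 * (k : ℤ) - n).natAbs < (2 * (k' : ℤ) - n).natAbs) :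
    n.choose k' < n.choose k := by
  have e1 : n.choose k = n.choose (min k (n - k)) := by
    rcases le_or_gt (2 * k) n with h2 | h2
    · rw [min_eq_left (by omega)]
    · rw [min_eq_right (by omega), Nat.choose_symm hk]
  have e2 : n.choose k' = n.choose (min k' (n - k')) := by
    rcases le_or_gt (2 * k') n with h2 | h2
    · rw [min_eq_left (by omega)]
    · rw [min_eq_right (by omega), Nat.choose_symm hk']
  rw [e1, e2]
  exact choose_lt_half (by omega) (by omega)

lemma fact_le (P : ℕ) : ∀ (δ m : ℕ), δ ≤ m →
    m.factorial * (P + m).factorial ≤ (m - δ).factorial * (P + m + δ).factorial := by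
  intro δ
  induction δ with
  | zero => intro m _; simp
  | succ d ih =>
    intro m hm
    refine le_trans (ih m (by omega)) ?_
    obtain ⟨v, hv⟩ : ∃ v, m - d = v + 1 := ⟨m - (d + 1), by omega⟩
    have hv2 : m - (d + 1) = v := by omega
    have hPe : P + m + (d + 1) = (P + m + d) + 1 := by ring
    rw [hv, hv2, hPe, Nat.factorial_succ, Nat.factorial_succ]
    have key : (v + 1) * (v.factorial * (P + m + d).factorial)
        ≤ (P + m + d + 1) * (v.factorial * (P + m + d).factorial) :=
      Nat.mul_le_mul_right _ (by omega)
    calc (v + 1) * v.factorial * (P + m + d).factorial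
        = (v + 1) * (v.factorial * (P + m + d).factorial) := by ring
      _ ≤ (P + m + d + 1) * (v.factorial * (P + m + d).factorial) := key
      _ = v.factorial * ((P + m + d + 1) * (P + m + d).factorial) := by ring

lemma cterm_pos {x : ℝ} (hx : 0 < x) (p q m : ℕ) : 0 < cterm x p q m := by
  rw [cterm]
  have h2 : 0 < x / 2 := by linarith
  apply mul_pos (pow_pos h2 _)
  apply div_pos
  · exact_mod_cast Nat.choose_pos (by omega)
  · positivity

/-- The key comparison of the two product series. -/
lemma key_lt {x : ℝ} (hx : 0 < x) (p q r w δ : ℕ)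
    (hδ : r + w = p + q + 2 * δ)
    (hdist : ((p : ℤ) - q).natAbs ≤ ((r : ℤ) - w).natAbs)
    (hstrict0 : δ = 0 → ((p : ℤ) - q).natAbs < ((r : ℤ) - w).natAbs) :
    (∑' m, cterm x r w m) < ∑' m, cterm x p q m := by
  have h2 : 0 < x / 2 := by linarith
  set B : ℕ → ℝ := fun m => if δ ≤ m then cterm x r w (m - δ) else 0 with hBdef
  have hBL : ∀ m, B m ≤ cterm x p q m := by
    intro m
    by_cases hdm : δ ≤ m
    · simp only [hBdef, if_pos hdm]
      rw [cterm, cterm]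
      have hexp : r + w + 2 * (m - δ) = p + q + 2 * m := by omega
      have hfac : r + w + (m - δ) = p + q + m + δ := by omega
      rw [hexp, hfac]
      refine mul_le_mul_of_nonneg_left ?_ (le_of_lt (pow_pos h2 _))
      refine div_le_div₀ (by positivity) ?_ (by positivity) ?_
      · have := choose_le_dist (n := p + q + 2 * m) (k := p + m) (k' := r + (m - δ))
          (by omega) (by omega)
        exact_mod_cast this
      · have := fact_le (p + q) δ m hdm
        have hfac2 : p + q + m + δ = p + q + (m - δ) + 2 * δ := by omega
        exact_mod_cast this
    · simp only [hBdef, if_neg hdm]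
      exact le_of_lt (cterm_pos hx p q m)
  have hB0 : ∀ m, 0 ≤ B m := by
    intro m
    by_cases hdm : δ ≤ m
    · simp only [hBdef, if_pos hdm]
      exact le_of_lt (cterm_pos hx r w _)
    · simp only [hBdef, if_neg hdm]
      exact le_refl 0
  have hstrict : B 0 < cterm x p q 0 := by
    by_cases hd0 : δ = 0
    · subst hd0
      simp only [hBdef, if_pos (le_refl 0), Nat.sub_zero]
      rw [cterm, cterm]
      have hrw : r + w = p + q := by omega
      rw [hrw]
      refine mul_lt_mul_of_pos_left ?_ (pow_pos h2 _)
      have hch : (p + q + 2 * 0).choose (r + 0) < (p + q + 2 * 0).choose (p + 0) := by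
        refine choose_lt_dist (by omega) (by omega) (by omega)
      have hfacpos : (0 : ℝ) <
          ((Nat.factorial 0 : ℝ) * (Nat.factorial (p + q + 0) : ℝ)) := by positivity
      exact (div_lt_div_iff_of_pos_right hfacpos).mpr (by exact_mod_cast hch)
    · have : ¬ δ ≤ 0 := by omega
      simp only [hBdef, if_neg this]
      exact cterm_pos hx p q 0
  have hSL : Summable (cterm x p q) := summable_cterm x p q
  have hlt : (∑' m, B m) < ∑' m, cterm x p q m :=
    Summable.tsum_lt_tsum_of_nonneg hB0 hBL hstrict hSL
  have hBsum : (∑' m, B m) = ∑' m, cterm x r w m := by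
    have hinj : Function.Injective (fun m : ℕ => m + δ) := add_left_injective δ
    have hsupp : Function.support B ⊆ Set.range (fun m : ℕ => m + δ) := by
      intro m hm
      by_contra hc
      have : ¬ δ ≤ m := fun hle => hc ⟨m - δ, by show m - δ + δ = m; omega⟩
      exact hm (by simp only [hBdef, if_neg this])
    have h1 := hinj.tsum_eq hsupp
    rw [← h1]
    refine tsum_congr fun m' => ?_
    show (if δ ≤ m' + δ then cterm x r w (m' + δ - δ) else 0) = cterm x r w m'
    rw [if_pos (Nat.le_add_left δ m'), Nat.add_sub_cancel]
  rw [← hBsum]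
  exact hlt

end FdetAux

/-- Case `l = 2`: `I_{k₁-n₁} I_{k₂-n₂} - I_{k₂-n₁} I_{k₁-n₂} > 0` for `k₁ > k₂`,
`n₁ > n₂` and `x > 0`. -/
theorem fdet_two_pos (k1 k2 n1 n2 : ℤ) (hk : k2 < k1) (hn : n2 < n1)
    (x : ℝ) (hx : 0 < x) :
    0 < besselI (k1 - n1) x * besselI (k2 - n2) x -
      besselI (k2 - n1) x * besselI (k1 - n2) x := by
  rw [FdetAux.besselI_mul, FdetAux.besselI_mul, sub_pos]
  set p := (k1 - n1).natAbs with hp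
  set q := (k2 - n2).natAbs with hq
  set r := (k2 - n1).natAbs with hr
  set w := (k1 - n2).natAbs with hw
  obtain ⟨δ, hδ⟩ : ∃ δ, r + w = p + q + 2 * δ := ⟨(r + w - (p + q)) / 2, by omega⟩
  exact FdetAux.key_lt hx p q r w δ hδ (by omega) (fun h0 => by omega)
end

section
/- Let v be the bounded linear operator on ℓ²(Y) (Y the set of strictly decreasing l-tuples in ℤ^l) given by (v f)(k) = (1/2)∑_{s=1}^l [f̃(k - e_s) + f̃(k + e_s)], where f̃ is the antisymmetric extension of f to ℤ^l (vanishing on tuples with repeated entries). Then the closed positive cone Ω = {f ∈ ℓ²(Y) : f(k) ≥ 0 for all k} is invariant under the flow of the linear ODE f' = v f: if f(0) ∈ Ω then f(x) ∈ Ω for all x ≥ 0. -/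
/-!
Moving one entry of a strictly decreasing tuple by `±1` produces either a strictly decreasing
tuple or one with a repeated entry, so no sign of a permutation ever enters `v`, and `v` maps
the closed cone of nonnegative sequences into itself. Hence so does every `v ^ n`, and for
`t ≥ 0` so does `exp (t • v) = ∑ tⁿ vⁿ / n!`. By uniqueness for the Lipschitz ODE `f' = v f`,
every solution is `φ t = exp (t • v) (φ 0)`.
-/

open scoped ENNReal

/-- The antisymmetric extension of a function on strictly decreasing tuples to all
of `ℤ^l`: it vanishes on tuples with repeated entries, and on an injective tuple `k`
it equals `sign(σ) · f(k ∘ σ)` where `k ∘ σ` is strictly decreasing. -/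
noncomputable def asymExt {l : ℕ} (f : {k : Fin l → ℤ // StrictAnti k} → ℝ)
    (k : Fin l → ℤ) : ℝ :=
  if h : ∃ σ : Equiv.Perm (Fin l), StrictAnti (k ∘ σ) then
    (Equiv.Perm.sign h.choose : ℤ) * f ⟨k ∘ h.choose, h.choose_spec⟩
  else 0

open NormedSpace

theorem Equiv.Perm.eq_one_of_strictMono {n : ℕ} {σ : Equiv.Perm (Fin n)} (hσ : StrictMono σ) :
    σ = 1 := by
  have hrange : Set.range σ = Set.range id := by simp
  exact Equiv.ext <| congrFun <| (hσ.range_inj strictMono_id).mp hrange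

-- An entry moved by at most one cannot pass another entry without meeting it.
theorem StrictAnti.update_of_injective {n : ℕ} {k : Fin n → ℤ} (hk : StrictAnti k) {s : Fin n}
    {c : ℤ} (hc : |c - k s| ≤ 1) (hinj : Function.Injective (Function.update k s c)) :
    StrictAnti (Function.update k s c) := by
  have hne : ∀ t, t ≠ s → k t ≠ c := fun t ht h => ht <| hinj <| by
    rw [Function.update_of_ne ht, Function.update_self, h]
  rw [abs_le] at hc
  intro i j hij
  have hkij := hk hij
  rcases eq_or_ne i s with rfl | hi
  · have hji : j ≠ i := hij.ne'
    have := hne j hji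
    simp only [Function.update_self, Function.update_of_ne hji]
    omega
  · rcases eq_or_ne j s with rfl | hj
    · have := hne i hi
      simp only [Function.update_self, Function.update_of_ne hi]
      omega
    · simpa only [Function.update_of_ne hi, Function.update_of_ne hj] using hkij

section asymExt

variable {l : ℕ} (f : {k : Fin l → ℤ // StrictAnti k} → ℝ)

theorem asymExt_of_strictAnti {k : Fin l → ℤ} (hk : StrictAnti k) : asymExt f k = f ⟨k, hk⟩ := by
  have hex : ∃ σ : Equiv.Perm (Fin l), StrictAnti (k ∘ σ) := ⟨1, hk⟩
  have hσ : hex.choose = 1 :=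
    Equiv.Perm.eq_one_of_strictMono fun _ _ hij => hk.lt_iff_gt.mp (hex.choose_spec hij)
  rw [asymExt, dif_pos hex]
  simp_rw [hσ]
  simp

theorem asymExt_eq_zero_of_not_injective {k : Fin l → ℤ} (hk : ¬Function.Injective k) :
    asymExt f k = 0 := by
  refine dif_neg fun ⟨σ, hσ⟩ => hk ?_
  simpa using hσ.injective.comp σ.symm.injective

theorem asymExt_update_nonneg (hf : ∀ k, 0 ≤ f k) {k : Fin l → ℤ} (hk : StrictAnti k)
    {s : Fin l} {c : ℤ} (hc : |c - k s| ≤ 1) : 0 ≤ asymExt f (Function.update k s c) := by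
  by_cases hinj : Function.Injective (Function.update k s c)
  · rw [asymExt_of_strictAnti f (hk.update_of_injective hc hinj)]
    exact hf _
  · rw [asymExt_eq_zero_of_not_injective f hinj]

end asymExt

namespace lp

variable (α : Type*) (p : ℝ≥0∞) [Fact (1 ≤ p)]

def nonnegCone : PointedCone ℝ (lp (fun _ : α => ℝ) p) where
  carrier := {f | ∀ i, 0 ≤ f i}
  add_mem' hf hg i := add_nonneg (hf i) (hg i)
  zero_mem' _ := le_rfl
  smul_mem' c _ hf i := mul_nonneg c.2 (hf i)

theorem isClosed_nonnegCone : IsClosed (nonnegCone α p : Set (lp (fun _ : α => ℝ) p)) := by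
  change IsClosed {f : lp (fun _ : α => ℝ) p | ∀ i, 0 ≤ f i}
  rw [Set.ofPred_forall]
  exact isClosed_iInter fun i => isClosed_le continuous_const (evalCLM ℝ _ p i).continuous

end lp

section Flow

variable {E : Type*} [NormedAddCommGroup E] [NormedSpace ℝ E]

theorem eq_exp_smul_apply_of_hasDerivAt [CompleteSpace E] {v : E →L[ℝ] E} {φ : ℝ → E}
    (hφ : ∀ t, HasDerivAt φ (v (φ t)) t) (t : ℝ) : φ t = exp (t • v) (φ 0) := by
  have hexp : ∀ t : ℝ, HasDerivAt (fun u => exp (u • v) (φ 0)) (v (exp (t • v) (φ 0))) t :=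
    fun t => (hasDerivAt_exp_smul_const' v t).clm_apply (hasDerivAt_const t (φ 0))
      |>.congr_deriv (by simp)
  exact congrFun (ODE_solution_unique_univ (v := fun _ => v) (s := fun _ => Set.univ)
    (fun _ => v.lipschitz.lipschitzOnWith) (fun t => ⟨hφ t, trivial⟩)
    (fun t => ⟨hexp t, trivial⟩) (t₀ := 0) (by simp)) t

namespace PointedCone

variable {K : PointedCone ℝ E} {v : E →L[ℝ] E}

theorem pow_apply_mem (hv : Set.MapsTo v K K) (n : ℕ) {x : E} (hx : x ∈ K) : (v ^ n) x ∈ K := by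
  induction n with
  | zero => simpa using hx
  | succ n ih => simpa [pow_succ'] using hv ih

theorem exp_smul_apply_mem [CompleteSpace E] (hK : IsClosed (K : Set E)) (hv : Set.MapsTo v K K)
    {t : ℝ} (ht : 0 ≤ t) {x : E} (hx : x ∈ K) : exp (t • v) x ∈ K := by
  have hseries : exp (t • v) x = ∑' n : ℕ, ((n.factorial : ℝ)⁻¹ • (t • v) ^ n) x := by
    rw [exp_eq_tsum ℝ]
    exact ((expSeries_summable' (t • v)).hasSum.mapL (ContinuousLinearMap.apply ℝ E x)).tsum_eq.symm
  rw [hseries]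
  refine tsum_mem hK fun n => ?_
  have hterm : ((n.factorial : ℝ)⁻¹ • (t • v) ^ n) x =
      ((n.factorial : ℝ)⁻¹ * t ^ n) • (v ^ n) x := by
    simp [smul_pow, mul_smul]
  rw [hterm]
  exact K.smul_mem (by positivity) (pow_apply_mem hv n hx)

theorem mem_of_hasDerivAt [CompleteSpace E] (hK : IsClosed (K : Set E)) (hv : Set.MapsTo v K K)
    {φ : ℝ → E} (hφ : ∀ t, HasDerivAt φ (v (φ t)) t) (h0 : φ 0 ∈ K) {t : ℝ} (ht : 0 ≤ t) :
    φ t ∈ K := by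
  rw [eq_exp_smul_apply_of_hasDerivAt hφ t]
  exact exp_smul_apply_mem hK hv ht h0

end PointedCone

end Flow

theorem positive_cone_invariant_general (l : ℕ)
    (v : lp (fun _ : {k : Fin l → ℤ // StrictAnti k} => ℝ) 2 →L[ℝ]
         lp (fun _ : {k : Fin l → ℤ // StrictAnti k} => ℝ) 2)
    (hv : ∀ f, ∀ k : {k : Fin l → ℤ // StrictAnti k},
      (v f) k = (∑ s : Fin l,
        (asymExt (fun k' => f k') (Function.update k.1 s (k.1 s - 1)) +
         asymExt (fun k' => f k') (Function.update k.1 s (k.1 s + 1)))) / 2)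
    (φ : ℝ → lp (fun _ : {k : Fin l → ℤ // StrictAnti k} => ℝ) 2)
    (hode : ∀ x : ℝ, HasDerivAt φ (v (φ x)) x)
    (h0 : ∀ k, 0 ≤ φ 0 k) :
    ∀ x : ℝ, 0 ≤ x → ∀ k, 0 ≤ φ x k := by
  have hv_nonneg : Set.MapsTo v (lp.nonnegCone {k : Fin l → ℤ // StrictAnti k} 2)
      (lp.nonnegCone {k : Fin l → ℤ // StrictAnti k} 2) := by
    intro f hf k
    rw [hv f k]
    refine div_nonneg (Finset.sum_nonneg fun s _ => add_nonneg ?_ ?_) zero_le_two <;>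
      exact asymExt_update_nonneg _ hf k.2 (by simp)
  intro x hx
  exact PointedCone.mem_of_hasDerivAt (lp.isClosed_nonnegCone _ 2) hv_nonneg hode h0 hx

/-- Let `v` be the bounded linear operator on `ℓ²(Y)` (`Y` the strictly decreasing
`l`-tuples in `ℤ^l`) given by `(v f)(k) = (1/2) ∑_s [f̃(k - e_s) + f̃(k + e_s)]`,
where `f̃` is the antisymmetric extension of `f`. Then the closed positive cone
`Ω = {f : f(k) ≥ 0 ∀k}` is invariant under the flow of `f' = v f`. -/
theorem positive_cone_invariant (l : ℕ) (hl : 1 ≤ l)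
    (v : lp (fun _ : {k : Fin l → ℤ // StrictAnti k} => ℝ) 2 →L[ℝ]
         lp (fun _ : {k : Fin l → ℤ // StrictAnti k} => ℝ) 2)
    (hv : ∀ f, ∀ k : {k : Fin l → ℤ // StrictAnti k},
      (v f) k = (∑ s : Fin l,
        (asymExt (fun k' => f k') (Function.update k.1 s (k.1 s - 1)) +
         asymExt (fun k' => f k') (Function.update k.1 s (k.1 s + 1)))) / 2)
    (φ : ℝ → lp (fun _ : {k : Fin l → ℤ // StrictAnti k} => ℝ) 2)
    (hode : ∀ x : ℝ, HasDerivAt φ (v (φ x)) x)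
    (h0 : ∀ k, 0 ≤ φ 0 k) :
    ∀ x : ℝ, 0 ≤ x → ∀ k, 0 ≤ φ x k :=
  positive_cone_invariant_general l v hv φ hode h0
end

section
/- Let a = (a_j)_{j∈ℤ} be a two-sided sequence of complex numbers with ∑_j |a_j| r^j < ∞ for all r > 0, M(a; w) = ∑_j a_j w^j, and for a strictly decreasing n ∈ ℤ^l let Δ_n(z) = det(z_i^{n_j}) and M_n(a; z) = Δ_n(z) ∏_{i=1}^l M(a; z_i). Then the Laurent coefficient of M_n(a; z) at the monomial z^k = z_1^{k_1}⋯z_l^{k_l} equals the determinant f_{k,n} = det(a_{k_j - n_i})_{i,j=1}^l, i.e., M_n(a; z) = ∑_{k∈ℤ^l} f_{k,n} z^k. -/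
/-!
Expanding the determinant, `f_{k,n} z^k = ∑_σ sgn σ ∏_j a_{k_j - n_{σ j}} z_j^{k_j}`. For fixed `σ`
the sum over `k ∈ ℤ^l` of the product factors into one-variable series, each absolutely convergent
with `∑_m a_{m-c} w^m = w^c M(a; w)`. Hence the `σ`-term sums to
`sgn σ ∏_j z_j^{n_{σ j}} M(a; z_j)`, and summing over `σ` gives `Δ_n(z) ∏_j M(a; z_j)`.
-/

open Finset Equiv

section PiProduct

variable {R β : Type*} [NormedCommRing R]

theorem prod_consEquiv_apply {l : ℕ} (f : Fin (l + 1) → β → R) (p : β × (Fin l → β)) :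
    ∏ i, f i (Fin.consEquiv (fun _ => β) p i) = f 0 p.1 * ∏ i : Fin l, f i.succ (p.2 i) := by
  simp [Fin.consEquiv, Fin.prod_univ_succ]

theorem summable_norm_prod_pi {l : ℕ} (f : Fin l → β → R)
    (hf : ∀ i, Summable fun m => ‖f i m‖) :
    Summable fun k : Fin l → β => ‖∏ i, f i (k i)‖ := by
  induction l with
  | zero => exact Summable.of_finite
  | succ l ih =>
    rw [← (Fin.consEquiv fun _ => β).summable_iff]
    simpa only [Function.comp_def, prod_consEquiv_apply] using
      (hf 0).mul_norm (ih (fun i => f i.succ) fun i => hf i.succ)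

theorem tsum_prod_pi [CompleteSpace R] {l : ℕ} (f : Fin l → β → R)
    (hf : ∀ i, Summable fun m => ‖f i m‖) :
    ∑' k : Fin l → β, ∏ i, f i (k i) = ∏ i, ∑' m, f i m := by
  induction l with
  | zero => simp
  | succ l ih =>
    have hsucc : ∀ i : Fin l, Summable fun m => ‖f i.succ m‖ := fun i => hf i.succ
    rw [← (Fin.consEquiv fun _ => β).tsum_eq, Fin.prod_univ_succ, ← ih _ hsucc,
      tsum_mul_tsum_of_summable_norm (hf 0) (summable_norm_prod_pi _ hsucc)]
    simp only [prod_consEquiv_apply]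

end PiProduct

section Shift

variable {𝕜 : Type*} [NormedField 𝕜] {a : ℤ → 𝕜} {z : 𝕜}

theorem summable_norm_shift_mul_zpow (ha : Summable fun j => ‖a j * z ^ j‖) (hz : z ≠ 0)
    (c : ℤ) : Summable fun m => ‖a (m - c) * z ^ m‖ := by
  rw [← (Equiv.addRight c).summable_iff]
  refine (ha.mul_right (‖z‖ ^ c)).congr fun j => ?_
  simp only [Function.comp_apply, coe_addRight, add_sub_cancel_right, norm_mul, norm_zpow,
    zpow_add₀ (norm_ne_zero_iff.mpr hz), mul_assoc]

theorem tsum_shift_mul_zpow (hz : z ≠ 0) (c : ℤ) :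
    ∑' m, a (m - c) * z ^ m = z ^ c * ∑' j, a j * z ^ j := by
  rw [← (Equiv.addRight c).tsum_eq, ← tsum_mul_left]
  refine tsum_congr fun j => ?_
  simp only [coe_addRight, add_sub_cancel_right, zpow_add₀ hz]
  ring

end Shift

theorem Matrix.det_mul_prod_eq_sum_perm {n R : Type*} [Fintype n] [DecidableEq n] [CommRing R]
    (M : Matrix n n R) (x : n → R) :
    M.det * ∏ i, x i = ∑ σ : Perm n, ((Perm.sign σ : ℤ) : R) * ∏ j, M (σ j) j * x j := by
  rw [Matrix.det_apply', sum_mul]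
  refine sum_congr rfl fun σ _ => ?_
  rw [mul_assoc, prod_mul_distrib]

theorem generating_function_laurent_general (l : ℕ) (a : ℤ → ℂ)
    (ha : ∀ r : ℝ, 0 < r → Summable (fun j : ℤ => ‖a j‖ * r ^ j))
    (n : Fin l → ℤ)
    (z : Fin l → ℂ) (hz : ∀ i, z i ≠ 0) :
    Summable (fun k : Fin l → ℤ =>
      ‖Matrix.det (fun i j : Fin l => a (k j - n i)) * ∏ i, z i ^ k i‖) ∧
    ∑' k : Fin l → ℤ,
        Matrix.det (fun i j : Fin l => a (k j - n i)) * ∏ i, z i ^ k i =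
      Matrix.det (fun i j : Fin l => z i ^ n j) * ∏ i, ∑' j : ℤ, a j * z i ^ j := by
  set F : Perm (Fin l) → Fin l → ℤ → ℂ := fun σ j m => a (m - n (σ j)) * z j ^ m
  have hF : ∀ σ j, Summable fun m => ‖F σ j m‖ := fun σ j =>
    summable_norm_shift_mul_zpow (by simpa [norm_zpow] using ha _ (norm_pos_iff.mpr (hz j)))
      (hz j) _
  have hterm : ∀ σ, Summable fun k : Fin l → ℤ => ‖((Perm.sign σ : ℤ) : ℂ) * ∏ j, F σ j (k j)‖ :=
    fun σ => ((summable_norm_prod_pi _ (hF σ)).mul_left ‖((Perm.sign σ : ℤ) : ℂ)‖).congr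
      fun k => (norm_mul _ _).symm
  have hexpand : ∀ k : Fin l → ℤ, Matrix.det (fun i j : Fin l => a (k j - n i)) * ∏ i, z i ^ k i
      = ∑ σ, ((Perm.sign σ : ℤ) : ℂ) * ∏ j, F σ j (k j) := fun k =>
    Matrix.det_mul_prod_eq_sum_perm _ _
  simp only [hexpand]
  refine ⟨.of_nonneg_of_le (fun _ => norm_nonneg _) (fun k => norm_sum_le _ _)
    (summable_sum fun σ _ => hterm σ), ?_⟩
  rw [Summable.tsum_finsetSum fun σ _ => (hterm σ).of_norm,
    ← Matrix.det_transpose (fun i j : Fin l => z i ^ n j), Matrix.det_mul_prod_eq_sum_perm]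
  refine sum_congr rfl fun σ _ => ?_
  rw [tsum_mul_left, tsum_prod_pi _ (hF σ)]
  exact congrArg _ (prod_congr rfl fun j _ => tsum_shift_mul_zpow (hz j) _)

/-- Generating function lemma: if `a = (a_j)_{j∈ℤ}` satisfies `∑_j |a_j| r^j < ∞`
for all `r > 0`, `M(a;w) = ∑_j a_j w^j`, `Δ_n(z) = det(z_i^{n_j})` and
`M_n(a;z) = Δ_n(z) ∏_i M(a;z_i)`, then the Laurent expansion of `M_n(a;z)` is
`∑_{k ∈ ℤ^l} f_{k,n} z^k` with `f_{k,n} = det(a_{k_j - n_i})`, the series converging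
absolutely. -/
theorem generating_function_laurent (l : ℕ) (hl : 1 ≤ l) (a : ℤ → ℂ)
    (ha : ∀ r : ℝ, 0 < r → Summable (fun j : ℤ => ‖a j‖ * r ^ j))
    (n : Fin l → ℤ) (hn : StrictAnti n)
    (z : Fin l → ℂ) (hz : ∀ i, z i ≠ 0) :
    Summable (fun k : Fin l → ℤ =>
      ‖Matrix.det (fun i j : Fin l => a (k j - n i)) * ∏ i, z i ^ k i‖) ∧
    ∑' k : Fin l → ℤ,
        Matrix.det (fun i j : Fin l => a (k j - n i)) * ∏ i, z i ^ k i =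
      Matrix.det (fun i j : Fin l => z i ^ n j) * ∏ i, ∑' j : ℤ, a j * z i ^ j :=
  generating_function_laurent_general l a ha n z hz
end
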